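/- arXiv:1503.06013 — 2 statements merged into one kernel-verified Lean document; each statement's English description precedes it below -/
import Mathlib

section
/- For all distinct positive real numbers a and b, I(a,b) > Q(A(a,b), G(a,b)) > √(I(A(a,b)², G(a,b)²)); in particular the left-hand inequality of Seiffert, I(a,b) > √(I(A(a,b)², G(a,b)²)), is refined through the root-square mean of A and G. -/
noncomputable def A (a b : ℝ) : ℝ := (a + b) / 2
noncomputable def G (a b : ℝ) : ℝ := Real.sqrt (a * b)
noncomputable def I (a b : ℝ) : ℝ := (1 / Real.exp 1) * (a ^ a / b ^ b) ^ (1 / (a - b))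
noncomputable def Q (a b : ℝ) : ℝ := Real.sqrt ((a ^ 2 + b ^ 2) / 2)

/-!
Since `log I a b = (a log a - b log b) / (a - b) - 1`, each inequality says that a function of `a`
vanishing at `a = b` is positive for `a > b`; both are proved by the sign of a derivative.
The right-hand inequality is `I < A` at `(A², G²)`, because `Q x y = √(A x² y²)`; there the
derivative is positive by `log t < t - 1`. For the left-hand one the derivative is `phi (b / a)`,
and `phi` is positive on `(0, 1)` since it first increases from `phi 0 = log 8 - 2 > 0` and then
decreases to `phi 1 = 0`.
-/

open Real Set

lemma lt_of_hasDerivAt_pos {f f' : ℝ → ℝ} {a b : ℝ} (hab : a < b)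
    (hf : ∀ x ∈ Icc a b, HasDerivAt f (f' x) x) (hf' : ∀ x ∈ Ioo a b, 0 < f' x) : f a < f b := by
  refine strictMonoOn_of_hasDerivWithinAt_pos (f' := f') (convex_Icc a b)
    (fun x hx ↦ (hf x hx).continuousAt.continuousWithinAt) (fun x hx ↦ ?_) (fun x hx ↦ ?_)
    (left_mem_Icc.2 hab.le) (right_mem_Icc.2 hab.le) hab
  all_goals rw [interior_Icc] at hx
  exacts [(hf x (Ioo_subset_Icc_self hx)).hasDerivWithinAt, hf' x hx]

lemma lt_of_hasDerivAt_neg {f f' : ℝ → ℝ} {a b : ℝ} (hab : a < b)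
    (hf : ∀ x ∈ Icc a b, HasDerivAt f (f' x) x) (hf' : ∀ x ∈ Ioo a b, f' x < 0) : f b < f a := by
  have := lt_of_hasDerivAt_pos (f := fun x ↦ -f x) hab (fun x hx ↦ (hf x hx).neg)
    (fun x hx ↦ neg_pos.2 (hf' x hx))
  simpa using this

/-- `phi (b / a)` is the derivative in `a` of `2 (a - b) log (I a b / Q (A a b) (G a b))`. -/
noncomputable def phi (u : ℝ) : ℝ :=
  log 8 - log (1 + 6 * u + u ^ 2) - (2 + 4 * u - 6 * u ^ 2) / (1 + 6 * u + u ^ 2)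

lemma hasDerivAt_phi {u : ℝ} (hu : 0 ≤ u) :
    HasDerivAt phi (2 * (1 - u) * (u ^ 2 - 10 * u + 1) / (1 + 6 * u + u ^ 2) ^ 2) u := by
  have hD : 0 < 1 + 6 * u + u ^ 2 := by positivity
  have hD' : HasDerivAt (fun t : ℝ ↦ 1 + 6 * t + t ^ 2) (6 + 2 * u) u :=
    ((((hasDerivAt_id' u).const_mul 6).const_add 1).add (hasDerivAt_pow 2 u)).congr_deriv
      (by norm_num)
  have hN' : HasDerivAt (fun t : ℝ ↦ 2 + 4 * t - 6 * t ^ 2) (4 - 12 * u) u :=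
    ((((hasDerivAt_id' u).const_mul 4).const_add 2).sub
      ((hasDerivAt_pow 2 u).const_mul 6)).congr_deriv (by norm_num; ring)
  refine (((hD'.log hD.ne').const_sub (log 8)).sub (hN'.div hD' hD.ne')).congr_deriv ?_
  field_simp
  ring

lemma phi_pos {u : ℝ} (hu₀ : 0 < u) (hu₁ : u < 1) : 0 < phi u := by
  -- `phi'` has the sign of `q x = x ^ 2 - 10 x + 1`, which decreases on `[0, 1]`: so `phi`
  -- increases from `phi 0 = log 8 - 2 > 0` and then decreases to `phi 1 = 0`.
  rcases le_or_gt 0 (u ^ 2 - 10 * u + 1) with hq | hq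
  · have h8 : 2 < log 8 := by
      rw [lt_log_iff_exp_lt (by norm_num), show (2 : ℝ) = 1 + 1 by norm_num, exp_add]
      nlinarith [exp_one_lt_d9, exp_pos 1]
    have h0 : phi 0 = log 8 - 2 := by norm_num [phi]
    refine (show 0 < phi 0 by linarith).trans
      (lt_of_hasDerivAt_pos hu₀ (fun x hx ↦ hasDerivAt_phi hx.1) fun x hx ↦ ?_)
    have hx₀ : 0 < x := hx.1
    have hq : 0 < x ^ 2 - 10 * x + 1 := by nlinarith [hx.2]
    have hx₁ : 0 < 1 - x := by linarith [hx.2]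
    exact div_pos (mul_pos (mul_pos two_pos hx₁) hq) (by positivity)
  · have h1 : phi 1 = 0 := by norm_num [phi]
    refine h1 ▸ lt_of_hasDerivAt_neg hu₁ (fun x hx ↦ hasDerivAt_phi (hu₀.le.trans hx.1))
      fun x hx ↦ ?_
    have hx₀ : 0 < x := hu₀.trans hx.1
    have hq : x ^ 2 - 10 * x + 1 < 0 := by nlinarith [hx.1, hx.2]
    have hx₁ : 0 < 1 - x := by linarith [hx.2]
    exact div_neg_of_neg_of_pos (mul_neg_of_pos_of_neg (mul_pos two_pos hx₁) hq) (by positivity)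

lemma log_I {a b : ℝ} (ha : 0 < a) (hb : 0 < b) (hab : a ≠ b) :
    log (I a b) = (a * log a - b * log b) / (a - b) - 1 := by
  have hA : 0 < a ^ a := rpow_pos_of_pos ha a
  have hB : 0 < b ^ b := rpow_pos_of_pos hb b
  rw [I, log_mul (by positivity) (by positivity), log_rpow (div_pos hA hB),
    log_div hA.ne' hB.ne', log_rpow ha, log_rpow hb, one_div, log_inv, log_exp]
  field_simp [sub_ne_zero.2 hab]
  ring

lemma I_pos {a b : ℝ} (ha : 0 < a) (hb : 0 < b) : 0 < I a b := by
  unfold I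
  positivity

lemma I_comm {a b : ℝ} (ha : 0 < a) (hb : 0 < b) : I b a = I a b := by
  have hpos : 0 < a ^ a / b ^ b := by positivity
  rw [I, I, ← inv_div (a ^ a), inv_rpow hpos.le, ← rpow_neg hpos.le, ← one_div_neg_eq_neg_one_div,
    neg_sub]

lemma Q_A_G {a b : ℝ} (ha : 0 ≤ a) (hb : 0 ≤ b) :
    Q (A a b) (G a b) = √((a ^ 2 + 6 * a * b + b ^ 2) / 8) := by
  rw [Q, A, G, sq_sqrt (mul_nonneg ha hb)]
  ring_nf

lemma A_comm (a b : ℝ) : A b a = A a b := by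
  rw [A, A, add_comm]

lemma G_comm (a b : ℝ) : G b a = G a b := by
  rw [G, G, mul_comm]

lemma G_pos {a b : ℝ} (ha : 0 < a) (hb : 0 < b) : 0 < G a b :=
  sqrt_pos.2 (mul_pos ha hb)

lemma G_lt_A {a b : ℝ} (ha : 0 < a) (hb : 0 < b) (hab : a ≠ b) : G a b < A a b := by
  rw [G, A, sqrt_lt' (by positivity)]
  nlinarith [sq_pos_of_ne_zero (sub_ne_zero.2 hab)]

lemma Q_eq_sqrt_A_sq (x y : ℝ) : Q x y = √(A (x ^ 2) (y ^ 2)) :=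
  rfl

lemma log_Q_A_G_lt_log_I {a b : ℝ} (hb : 0 < b) (hba : b < a) :
    log (Q (A a b) (G a b)) < log (I a b) := by
  have ha : 0 < a := hb.trans hba
  rw [Q_A_G ha.le hb.le, log_sqrt (by positivity), log_I ha hb hba.ne']
  let F : ℝ → ℝ := fun x ↦
    2 * (x * log x - b * log b) - 2 * (x - b) - (x - b) * log ((x ^ 2 + 6 * x * b + b ^ 2) / 8)
  have hF : ∀ x ∈ Icc b a, HasDerivAt F (phi (b / x)) x := by
    intro x hx
    have hx₀ : 0 < x := hb.trans_le hx.1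
    have hD : 0 < (x ^ 2 + 6 * x * b + b ^ 2) / 8 := by positivity
    have hD' : HasDerivAt (fun t ↦ (t ^ 2 + 6 * t * b + b ^ 2) / 8) ((2 * x + 6 * b) / 8) x :=
      ((((hasDerivAt_pow 2 x).add ((hasDerivAt_id' x).const_mul 6 |>.mul_const b)).add_const
        (b ^ 2)).div_const 8).congr_deriv (by norm_num)
    have hlog : log (1 + 6 * (b / x) + (b / x) ^ 2)
        = log ((x ^ 2 + 6 * x * b + b ^ 2) / 8) + log 8 - 2 * log x := by
      rw [show 1 + 6 * (b / x) + (b / x) ^ 2 = (x ^ 2 + 6 * x * b + b ^ 2) / 8 * 8 / x ^ 2 by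
        field_simp, log_div (by positivity) (by positivity), log_mul hD.ne' (by norm_num),
        log_pow]
      push_cast
      ring
    refine ((((hasDerivAt_mul_log hx₀.ne').sub_const (b * log b)).const_mul 2).sub
      (((hasDerivAt_id' x).sub_const b).const_mul 2) |>.sub
      (((hasDerivAt_id' x).sub_const b).mul (hD'.log hD.ne'))).congr_deriv ?_
    rw [phi, hlog]
    field_simp
    ring
  have hF_pos := lt_of_hasDerivAt_pos hba hF fun x hx ↦
    phi_pos (div_pos hb (hb.trans hx.1)) ((div_lt_one (hb.trans hx.1)).2 hx.1)
  simp only [F, sub_self, mul_zero, zero_mul] at hF_pos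
  rw [lt_sub_iff_add_lt, div_add_one two_ne_zero, div_lt_div_iff₀ two_pos (sub_pos.2 hba)]
  linarith

lemma log_I_lt_log_A {x y : ℝ} (hy : 0 < y) (hyx : y < x) : log (I x y) < log (A x y) := by
  rw [log_I (hy.trans hyx) hy hyx.ne', A]
  let K : ℝ → ℝ := fun t ↦ (t - y) * (log ((t + y) / 2) + 1) - (t * log t - y * log y)
  have hK : ∀ t ∈ Icc y x, HasDerivAt K (log ((t + y) / 2) - log t + (t - y) / (t + y)) t := by
    intro t ht
    have ht₀ : 0 < t := hy.trans_le ht.1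
    have hM : HasDerivAt (fun s ↦ (s + y) / 2) (1 / 2) t :=
      ((hasDerivAt_id' t).add_const y).div_const 2
    refine (((hasDerivAt_id' t).sub_const y).mul ((hM.log (by positivity)).add_const 1)).sub
      ((hasDerivAt_mul_log ht₀.ne').sub_const _) |>.congr_deriv ?_
    field_simp
    ring
  have hK_pos := lt_of_hasDerivAt_pos hyx hK fun t ht ↦ by
    have ht₀ : 0 < t := hy.trans ht.1
    have hM : 0 < (t + y) / 2 := by positivity
    have hlog := log_lt_sub_one_of_pos (div_pos ht₀ hM) (by
      rw [ne_eq, div_eq_one_iff_eq hM.ne']; linarith [ht.1])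
    rw [log_div ht₀.ne' hM.ne'] at hlog
    have heq : t / ((t + y) / 2) - 1 = (t - y) / (t + y) := by field_simp; ring
    linarith
  simp only [K, sub_self, zero_mul] at hK_pos
  rw [sub_lt_iff_lt_add, div_lt_iff₀ (sub_pos.2 hyx)]
  linarith

lemma Q_A_G_lt_I {a b : ℝ} (ha : 0 < a) (hb : 0 < b) (hab : a ≠ b) : Q (A a b) (G a b) < I a b := by
  wlog hba : b < a generalizing a b
  · simpa only [A_comm, G_comm, I_comm ha hb] using
      this hb ha hab.symm (lt_of_le_of_ne (not_lt.1 hba) hab)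
  have hQ : 0 < Q (A a b) (G a b) := by
    rw [Q_A_G ha.le hb.le]
    positivity
  rw [← log_lt_log_iff hQ (I_pos ha hb)]
  exact log_Q_A_G_lt_log_I hb hba

lemma I_lt_A {x y : ℝ} (hx : 0 < x) (hy : 0 < y) (hxy : x ≠ y) : I x y < A x y := by
  wlog hyx : y < x generalizing x y
  · simpa only [A_comm, I_comm hx hy] using
      this hy hx hxy.symm (lt_of_le_of_ne (not_lt.1 hyx) hxy)
  rw [← log_lt_log_iff (I_pos hx hy) (by rw [A]; positivity)]
  exact log_I_lt_log_A hy hyx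

lemma sqrt_I_sq_lt_Q {x y : ℝ} (hx : 0 < x) (hy : 0 < y) (hxy : x ≠ y) :
    √(I (x ^ 2) (y ^ 2)) < Q x y := by
  rw [Q_eq_sqrt_A_sq]
  refine sqrt_lt_sqrt (I_pos (by positivity) (by positivity)).le (I_lt_A (by positivity)
    (by positivity) ?_)
  rwa [ne_eq, pow_left_inj₀ hx.le hy.le two_ne_zero]

theorem stmt_3 (a b : ℝ) (ha : 0 < a) (hb : 0 < b) (hab : a ≠ b) :
    I a b > Q (A a b) (G a b) ∧
    Q (A a b) (G a b) > Real.sqrt (I (A a b ^ 2) (G a b ^ 2)) :=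
  ⟨Q_A_G_lt_I ha hb hab,
    sqrt_I_sq_lt_Q ((G_pos ha hb).trans (G_lt_A ha hb hab)) (G_pos ha hb) (G_lt_A ha hb hab).ne'⟩
end

section
/- For all distinct positive real numbers a and b, (L(I(a,b), G(a,b)))² < L(a,b)·L(I(a,b), G(a,b)) < L(I(a,b)², G(a,b)²) < L(a,b)·(I(a,b) + G(a,b))/2. -/
noncomputable def L (a b : ℝ) : ℝ := (a - b) / (Real.log a - Real.log b)
/-!
Write `a = g e^s`, `b = g e^(-s)` with `g = G(a, b)`. Then `L(a, b) = g sinh s / s`,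
`I(a, b) = g e^x` with `x = s coth s - 1`, and `L(u², v²) = L(u, v) (u + v) / 2`, so the three
inequalities reduce to `L(I, G) < L(a, b) < (I + G) / 2` (the second one is Alzer's), that is,
to `2 sinh s / s - 1 < e^x < 1 + cosh s - sinh s / s`. After taking logarithms both differences
tend to `0` as `s → 0⁺`, and their derivatives have numerators `(sinh s - s) Φ(s)` and
`(sinh s - s) Φ(s) + sinh³ s - s³ cosh s`, where `Φ(s) = sinh² s + s sinh s - s² (1 + cosh s)`.
Everything therefore rests on Lazarević's inequality `s³ cosh s < sinh³ s`, proved by comparing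
power series, which also gives `Φ > 0` by AM-GM after halving `s`.
-/

open Real Filter Topology
open scoped Nat

theorem sinh_lt_mul_cosh {s : ℝ} (hs : 0 < s) : sinh s < s * cosh s := by
  have hcosh : HasSum (fun n : ℕ => s ^ (2 * n + 1) / (2 * n)!) (s * cosh s) :=
    ((hasSum_cosh s).mul_left s).congr_fun fun n => by ring
  refine hasSum_lt (i := 1) (fun n => ?_) ?_ (hasSum_sinh s) hcosh
  · dsimp only
    gcongr
    omega
  · norm_num [Nat.factorial]
    nlinarith [pow_pos hs 3]

theorem one_lt_mul_cosh_div_sinh {s : ℝ} (hs : s ≠ 0) : 1 < s * cosh s / sinh s := by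
  wlog hpos : 0 < s generalizing s
  · simpa [neg_div_neg_eq] using this (neg_ne_zero.mpr hs) (by grind)
  rw [one_lt_div (sinh_pos_iff.mpr hpos)]
  exact sinh_lt_mul_cosh hpos

theorem four_mul_prod_add_three_le_three_pow (n : ℕ) :
    4 * ((2 * n + 1) * (2 * n + 2) * (2 * n + 3)) + 3 ≤ 3 ^ (2 * n + 3) := by
  induction n with
  | zero => norm_num
  | succ n ih =>
    rw [show 2 * (n + 1) + 3 = 2 * n + 3 + 2 by ring, pow_add]
    nlinarith [Nat.mul_le_mul_right 9 ih, Nat.zero_le (n ^ 3), Nat.zero_le (n ^ 2)]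

theorem pow_three_mul_cosh_lt_sinh_pow_three {s : ℝ} (hs : 0 < s) :
    s ^ 3 * cosh s < sinh s ^ 3 := by
  have hsinh : HasSum (fun n : ℕ => (3 ^ (2 * n + 3) - 3) / 4 * s ^ (2 * n + 3) / (2 * n + 3)!)
      (sinh s ^ 3) := by
    have h := ((hasSum_sinh (3 * s)).sub ((hasSum_sinh s).mul_left 3)).div_const 4
    rw [← hasSum_nat_add_iff' 1] at h
    have hval : (sinh (3 * s) - 3 * sinh s) / 4 - ∑ i ∈ Finset.range 1,
        ((3 * s) ^ (2 * i + 1) / (2 * i + 1)! - 3 * (s ^ (2 * i + 1) / (2 * i + 1)!)) / 4 =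
        sinh s ^ 3 := by
      simp [sinh_three_mul]
    rw [hval] at h
    refine h.congr_fun fun n => ?_
    rw [show 2 * (n + 1) + 1 = 2 * n + 3 by ring, mul_pow]
    ring
  have hcosh : HasSum (fun n : ℕ => s ^ (2 * n + 3) / (2 * n)!) (s ^ 3 * cosh s) :=
    ((hasSum_cosh s).mul_left (s ^ 3)).congr_fun fun n => by ring
  refine hasSum_lt (i := 2) (fun n => ?_) ?_ hcosh hsinh
  · have hfac : ((2 * n + 3)! : ℝ) = (2 * n + 1) * (2 * n + 2) * (2 * n + 3) * (2 * n)! := by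
      push_cast [Nat.factorial_succ]; ring
    have hcoef : (4 * ((2 * n + 1) * (2 * n + 2) * (2 * n + 3)) + 3 : ℝ) ≤ 3 ^ (2 * n + 3) := by
      exact_mod_cast four_mul_prod_add_three_le_three_pow n
    dsimp only
    rw [hfac, div_le_div_iff₀ (by positivity) (by positivity)]
    calc _ = ((2 * n + 1) * (2 * n + 2) * (2 * n + 3)) * (s ^ (2 * n + 3) * (2 * n)!) := by ring
      _ ≤ (3 ^ (2 * n + 3) - 3) / 4 * (s ^ (2 * n + 3) * (2 * n)!) := by gcongr; linarith
      _ = _ := by ring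
  · norm_num [Nat.factorial]
    nlinarith [pow_pos hs 7]

theorem sq_mul_one_add_cosh_lt {s : ℝ} (hs : 0 < s) :
    s ^ 2 * (1 + cosh s) < sinh s ^ 2 + s * sinh s := by
  obtain ⟨t, rfl⟩ : ∃ t, s = 2 * t := ⟨s / 2, by ring⟩
  have ht : 0 < t := by linarith
  have hC := cosh_pos t
  -- AM-GM for `sinh t ^ 2 * cosh t` and `t * sinh t`, whose product exceeds
  -- `(t ^ 2 * cosh t) ^ 2` by Lazarević's inequality
  have key : 2 * t ^ 2 * cosh t < sinh t ^ 2 * cosh t + t * sinh t := by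
    refine lt_of_pow_lt_pow_left₀ 2 (by positivity) ?_
    nlinarith [sq_nonneg (sinh t ^ 2 * cosh t - t * sinh t),
      mul_lt_mul_of_pos_left (pow_three_mul_cosh_lt_sinh_pow_three ht) (mul_pos ht hC)]
  have hcosh : 1 + cosh (2 * t) = 2 * cosh t ^ 2 := by rw [cosh_two_mul, cosh_sq]; ring
  rw [hcosh, sinh_two_mul]
  linarith [mul_lt_mul_of_pos_left key (mul_pos hC (by norm_num : (0 : ℝ) < 4))]

theorem pos_of_tendsto_zero_of_hasDerivAt_pos {f f' : ℝ → ℝ}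
    (hf : ∀ s, 0 < s → HasDerivAt f (f' s) s) (hf' : ∀ s, 0 < s → 0 < f' s)
    (hlim : Tendsto f (𝓝[>] 0) (𝓝 0)) {s : ℝ} (hs : 0 < s) : 0 < f s := by
  have hmono : StrictMonoOn f (Set.Ioi 0) :=
    strictMonoOn_of_hasDerivWithinAt_pos (convex_Ioi 0)
      (fun x hx => (hf x hx).continuousAt.continuousWithinAt)
      (fun x hx => (hf x (by simpa using hx)).hasDerivWithinAt)
      (fun x hx => hf' x (by simpa using hx))
  have hhalf : 0 ≤ f (s / 2) := by
    refine le_of_tendsto hlim ?_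
    filter_upwards [Ioo_mem_nhdsGT (half_pos hs)] with t ht
    exact (hmono ht.1 (half_pos hs) ht.2).le
  exact hhalf.trans_lt (hmono (half_pos hs) hs (half_lt_self hs))

theorem tendsto_cosh_nhdsGT_zero : Tendsto cosh (𝓝[>] 0) (𝓝 1) := by
  simpa using (continuous_cosh.tendsto 0).mono_left nhdsWithin_le_nhds

theorem tendsto_sinh_div_self : Tendsto (fun s => sinh s / s) (𝓝[>] 0) (𝓝 1) := by
  simpa [div_eq_inv_mul] using (hasDerivAt_sinh 0).tendsto_slope_zero_right

theorem tendsto_mul_cosh_div_sinh : Tendsto (fun s => s * cosh s / sinh s) (𝓝[>] 0) (𝓝 1) := by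
  have h : Tendsto (fun s => cosh s / (sinh s / s)) (𝓝[>] 0) (𝓝 (1 / 1)) :=
    tendsto_cosh_nhdsGT_zero.div tendsto_sinh_div_self one_ne_zero
  rw [div_one] at h
  exact h.congr fun s => by rw [div_div_eq_mul_div, mul_comm]

theorem hasDerivAt_mul_cosh_div_sinh {s : ℝ} (hs : s ≠ 0) :
    HasDerivAt (fun t => t * cosh t / sinh t) ((sinh s * cosh s - s) / sinh s ^ 2) s :=
  (((hasDerivAt_id s).mul (hasDerivAt_cosh s)).div (hasDerivAt_sinh s)
    (sinh_ne_zero.mpr hs)).congr_deriv (by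
      simp only [id, Pi.mul_apply]
      linear_combination (-s / sinh s ^ 2) * cosh_sq s)

theorem exp_lt_one_add_cosh_sub_sinh_div {s : ℝ} (hs : s ≠ 0) :
    exp (s * cosh s / sinh s - 1) < 1 + cosh s - sinh s / s := by
  wlog hs : 0 < s generalizing s
  · simpa [neg_div_neg_eq] using this (neg_ne_zero.mpr ‹s ≠ 0›) (by grind)
  have hpos : ∀ t, 0 < t → 0 < t + t * cosh t - sinh t := fun t ht => by
    linarith [sinh_lt_mul_cosh ht]
  have hdiv : ∀ t, 0 < t → (t + t * cosh t - sinh t) / t = 1 + cosh t - sinh t / t :=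
    fun t ht => by field_simp
  rw [← hdiv s hs, ← lt_log_iff_exp_lt (div_pos (hpos s hs) hs), log_div (hpos s hs).ne' hs.ne',
    ← sub_pos]
  refine pos_of_tendsto_zero_of_hasDerivAt_pos
    (f := fun t => log (t + t * cosh t - sinh t) - log t - (t * cosh t / sinh t - 1))
    (f' := fun t => (1 + t * sinh t) / (t + t * cosh t - sinh t) - t⁻¹ -
      (sinh t * cosh t - t) / sinh t ^ 2)
    (fun t ht => ?_) (fun t ht => ?_) ?_ hs
  · have hT : HasDerivAt (fun t => t + t * cosh t - sinh t) (1 + t * sinh t) t :=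
      (((hasDerivAt_id t).add ((hasDerivAt_id t).mul (hasDerivAt_cosh t))).sub
        (hasDerivAt_sinh t)).congr_deriv (by simp only [id]; ring)
    exact ((hT.log (hpos t ht).ne').sub (hasDerivAt_log ht.ne')).sub
      ((hasDerivAt_mul_cosh_div_sinh ht.ne').sub_const 1)
  · have hΘ : 0 < (sinh t - t) * (sinh t ^ 2 + t * sinh t - t ^ 2 * (1 + cosh t)) :=
      mul_pos (sub_pos.mpr (self_lt_sinh_iff.mpr ht)) (sub_pos.mpr (sq_mul_one_add_cosh_lt ht))
    rw [sub_sub, sub_pos, inv_eq_one_div, div_add_div _ _ ht.ne' (by positivity),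
      div_lt_div_iff₀ (by positivity) (hpos t ht)]
    linear_combination hΘ + (t ^ 2 * sinh t) * cosh_sq t
  · have h := (((tendsto_const_nhds (x := (1 : ℝ))).add tendsto_cosh_nhdsGT_zero).sub
      tendsto_sinh_div_self).log (by norm_num) |>.sub (tendsto_mul_cosh_div_sinh.sub_const 1)
    simp only [add_sub_cancel_right, log_one, sub_self] at h
    refine h.congr' ?_
    filter_upwards [self_mem_nhdsWithin] with t ht
    rw [← hdiv t ht, log_div (hpos t ht).ne' (ne_of_gt ht)]

theorem two_mul_sinh_div_sub_one_lt_exp {s : ℝ} (hs : s ≠ 0) :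
    2 * (sinh s / s) - 1 < exp (s * cosh s / sinh s - 1) := by
  wlog hs : 0 < s generalizing s
  · simpa [neg_div_neg_eq] using this (neg_ne_zero.mpr ‹s ≠ 0›) (by grind)
  have hpos : ∀ t, 0 < t → 0 < 2 * sinh t - t := fun t ht => by
    linarith [self_lt_sinh_iff.mpr ht]
  have hdiv : ∀ t, 0 < t → (2 * sinh t - t) / t = 2 * (sinh t / t) - 1 :=
    fun t ht => by field_simp
  rw [← hdiv s hs, ← log_lt_iff_lt_exp (div_pos (hpos s hs) hs), log_div (hpos s hs).ne' hs.ne',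
    ← sub_pos]
  refine pos_of_tendsto_zero_of_hasDerivAt_pos
    (f := fun t => t * cosh t / sinh t - 1 - (log (2 * sinh t - t) - log t))
    (f' := fun t => (sinh t * cosh t - t) / sinh t ^ 2 -
      ((2 * cosh t - 1) / (2 * sinh t - t) - t⁻¹))
    (fun t ht => ?_) (fun t ht => ?_) ?_ hs
  · have hT : HasDerivAt (fun t => 2 * sinh t - t) (2 * cosh t - 1) t :=
      ((hasDerivAt_sinh t).const_mul 2).sub (hasDerivAt_id t)
    exact ((hasDerivAt_mul_cosh_div_sinh ht.ne').sub_const 1).sub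
      ((hT.log (hpos t ht).ne').sub (hasDerivAt_log ht.ne'))
  · have hΛ : 0 < (sinh t - t) * (sinh t ^ 2 + t * sinh t - t ^ 2 * (1 + cosh t)) +
        (sinh t ^ 3 - t ^ 3 * cosh t) :=
      add_pos (mul_pos (sub_pos.mpr (self_lt_sinh_iff.mpr ht))
        (sub_pos.mpr (sq_mul_one_add_cosh_lt ht)))
        (sub_pos.mpr (pow_three_mul_cosh_lt_sinh_pow_three ht))
    rw [sub_pos, sub_lt_iff_lt_add, inv_eq_one_div, div_add_div _ _ (by positivity) ht.ne',
      div_lt_div_iff₀ (hpos t ht) (by positivity)]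
    linear_combination hΛ
  · have h := (tendsto_mul_cosh_div_sinh.sub_const 1).sub
      (((tendsto_sinh_div_self.const_mul 2).sub_const 1).log (by norm_num))
    norm_num only [sub_self, log_one] at h
    refine h.congr' ?_
    filter_upwards [self_mem_nhdsWithin] with t ht
    rw [← hdiv t ht, log_div (hpos t ht).ne' (ne_of_gt ht)]

theorem L_sq_sq (u v : ℝ) : L (u ^ 2) (v ^ 2) = L u v * (u + v) / 2 := by
  unfold L
  rw [log_pow, log_pow, Nat.cast_ofNat, ← mul_sub]
  rcases eq_or_ne (log u - log v) 0 with h | h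
  · simp [h]
  · field_simp
    ring

theorem L_mul_exp {g : ℝ} (hg : 0 < g) (u v : ℝ) :
    L (g * exp u) (g * exp v) = g * ((exp u - exp v) / (u - v)) := by
  rw [L, log_mul hg.ne' (exp_ne_zero u), log_mul hg.ne' (exp_ne_zero v), log_exp, log_exp,
    add_sub_add_left_eq_sub, ← mul_sub, mul_div_assoc]

theorem L_mul_exp_neg {g : ℝ} (hg : 0 < g) (s : ℝ) :
    L (g * exp s) (g * exp (-s)) = g * (sinh s / s) := by
  rw [L_mul_exp hg, sinh_eq]
  ring

theorem L_mul_exp_self {g : ℝ} (hg : 0 < g) (x : ℝ) :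
    L (g * exp x) g = g * ((exp x - 1) / x) := by
  simpa using L_mul_exp hg x 0

theorem G_mul_exp_neg {g : ℝ} (hg : 0 < g) (s : ℝ) : G (g * exp s) (g * exp (-s)) = g := by
  rw [G, show g * exp s * (g * exp (-s)) = g ^ 2 by rw [exp_neg]; field_simp, sqrt_sq hg.le]

theorem I_eq_exp {a b : ℝ} (ha : 0 < a) (hb : 0 < b) :
    I a b = exp ((a * log a - b * log b) / (a - b) - 1) := by
  rw [I, rpow_def_of_pos (div_pos (rpow_pos_of_pos ha a) (rpow_pos_of_pos hb b)),
    log_div (rpow_pos_of_pos ha a).ne' (rpow_pos_of_pos hb b).ne', log_rpow ha, log_rpow hb,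
    one_div, ← exp_neg, ← exp_add]
  ring_nf

theorem I_mul_exp_neg {g s : ℝ} (hg : 0 < g) (hs : s ≠ 0) :
    I (g * exp s) (g * exp (-s)) = g * exp (s * cosh s / sinh s - 1) := by
  have hσ : exp s - exp (-s) ≠ 0 := by
    rw [sub_ne_zero, Ne, exp_eq_exp]; intro h; exact hs (by linarith)
  rw [I_eq_exp (by positivity) (by positivity), log_mul hg.ne' (exp_ne_zero s),
    log_mul hg.ne' (exp_ne_zero (-s)), log_exp, log_exp, cosh_eq, sinh_eq]
  conv_rhs => rw [← exp_log hg, ← exp_add]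
  congr 1
  field_simp
  ring

theorem exists_eq_mul_exp_neg {a b : ℝ} (ha : 0 < a) (hb : 0 < b) (hab : a ≠ b) :
    ∃ g s, 0 < g ∧ s ≠ 0 ∧ a = g * exp s ∧ b = g * exp (-s) := by
  refine ⟨exp ((log a + log b) / 2), (log a - log b) / 2, exp_pos _, ?_, ?_, ?_⟩
  · intro h
    exact hab (log_injOn_pos ha hb (by linarith))
  · rw [← exp_add]; ring_nf; exact (exp_log ha).symm
  · rw [← exp_add]; ring_nf; exact (exp_log hb).symm

theorem L_I_G_pos {a b : ℝ} (ha : 0 < a) (hb : 0 < b) (hab : a ≠ b) :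
    0 < L (I a b) (G a b) := by
  obtain ⟨g, s, hg, hs, rfl, rfl⟩ := exists_eq_mul_exp_neg ha hb hab
  rw [I_mul_exp_neg hg hs, G_mul_exp_neg hg, L_mul_exp_self hg]
  have hx := sub_pos.mpr (one_lt_mul_cosh_div_sinh hs)
  have hexp := add_one_lt_exp hx.ne'
  exact mul_pos hg (div_pos (by linarith) hx)

theorem L_I_G_lt_L {a b : ℝ} (ha : 0 < a) (hb : 0 < b) (hab : a ≠ b) :
    L (I a b) (G a b) < L a b := by
  obtain ⟨g, s, hg, hs, rfl, rfl⟩ := exists_eq_mul_exp_neg ha hb hab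
  rw [I_mul_exp_neg hg hs, G_mul_exp_neg hg, L_mul_exp_self hg, L_mul_exp_neg hg]
  have hx := sub_pos.mpr (one_lt_mul_cosh_div_sinh hs)
  have hmx : sinh s / s * (s * cosh s / sinh s - 1) = cosh s - sinh s / s := by
    field_simp [sinh_ne_zero.mpr hs]
  refine mul_lt_mul_of_pos_left ?_ hg
  rw [div_lt_iff₀ hx, hmx]
  linarith [exp_lt_one_add_cosh_sub_sinh_div hs]

theorem L_lt_I_add_G_div_two {a b : ℝ} (ha : 0 < a) (hb : 0 < b) (hab : a ≠ b) :
    L a b < (I a b + G a b) / 2 := by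
  obtain ⟨g, s, hg, hs, rfl, rfl⟩ := exists_eq_mul_exp_neg ha hb hab
  rw [I_mul_exp_neg hg hs, G_mul_exp_neg hg, L_mul_exp_neg hg]
  linarith [mul_lt_mul_of_pos_left (two_mul_sinh_div_sub_one_lt_exp hs) hg]

theorem stmt_9 (a b : ℝ) (ha : 0 < a) (hb : 0 < b) (hab : a ≠ b) :
    (L (I a b) (G a b)) ^ 2 < L a b * L (I a b) (G a b) ∧
    L a b * L (I a b) (G a b) < L (I a b ^ 2) (G a b ^ 2) ∧
    L (I a b ^ 2) (G a b ^ 2) < L a b * (I a b + G a b) / 2 := by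
  have hpos := L_I_G_pos ha hb hab
  have hlt := L_I_G_lt_L ha hb hab
  have hAlzer := L_lt_I_add_G_div_two ha hb hab
  have hmean : 0 < I a b + G a b := by linarith
  rw [L_sq_sq, mul_div_assoc, mul_div_assoc]
  refine ⟨?_, ?_, ?_⟩
  · rw [sq]
    exact mul_lt_mul_of_pos_right hlt hpos
  · rw [mul_comm]
    exact mul_lt_mul_of_pos_left hAlzer hpos
  · exact mul_lt_mul_of_pos_right hlt (by positivity)
end
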